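/- arXiv:1807.11109 — 3 statements merged into one kernel-verified Lean document; each statement's English description precedes it below -/
import Mathlib

section
/- In the Advantage Process with $b$ balls run for $r$ rounds, let $a_i^* = a_{r,i}$. If $|i| > \sqrt{2r \ln b}$ then $a_i^* = 0$. -/
/-!
The exponential potential `∑ᵢ aᵢ e^{λ i}` grows by a factor at most `cosh λ` per round: a pair
of balls split between the two neighbours of box `i` contributes
`e^{λ(i-1)} + e^{λ(i+1)} = 2 cosh λ · e^{λ i}`, and a ball kept in place contributes
`e^{λ i} ≤ cosh λ · e^{λ i}`. Hence `a_{r,i} e^{λ i} ≤ b cosh(λ)^r ≤ b e^{r λ² / 2}`, and the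
choice `λ = i / r` gives `a_{r,i} ≤ b e^{-i² / 2r}`, which is `< 1` as soon as `i² > 2 r ln b`.
-/

/-- The Advantage Process with `b` balls: `adv b j i` is the number of balls in box `i`
after round `j`. Initially all `b` balls are in box `0`; in each round every box sends
half (rounded down) of its balls to each neighbouring box, keeping one ball if its
count is odd. -/
def adv (b : ℕ) : ℕ → ℤ → ℕ
  | 0, i => if i = 0 then b else 0
  | j + 1, i => adv b j (i - 1) / 2 + adv b j (i + 1) / 2 + adv b j i % 2

open Real
open scoped ENNReal

def advStep (a : ℤ → ℕ) (i : ℤ) : ℕ :=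
  a (i - 1) / 2 + a (i + 1) / 2 + a i % 2

lemma adv_succ (b j : ℕ) : adv b (j + 1) = advStep (adv b j) := rfl

section Potential

variable {w : ℤ → ℝ≥0∞} {c : ℝ≥0∞}

lemma div_two_mul_add_mod_two_mul_le (hc : 1 ≤ c) {u v x : ℝ≥0∞} (h : u + v ≤ 2 * c * x)
    (n : ℕ) : ((n / 2 : ℕ) : ℝ≥0∞) * (u + v) + ((n % 2 : ℕ) : ℝ≥0∞) * x ≤ c * (n * x) := calc
  ((n / 2 : ℕ) : ℝ≥0∞) * (u + v) + ((n % 2 : ℕ) : ℝ≥0∞) * x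
    ≤ ((n / 2 : ℕ) : ℝ≥0∞) * (2 * c * x) + ((n % 2 : ℕ) : ℝ≥0∞) * (c * x) := by
      gcongr; exact le_mul_of_one_le_left' hc
  _ = c * ((2 * (n / 2 : ℕ) + (n % 2 : ℕ) : ℕ) * x) := by push_cast; ring
  _ = c * (n * x) := by rw [Nat.div_add_mod]

theorem tsum_advStep_mul_le (hc : 1 ≤ c) (hw : ∀ i, w (i - 1) + w (i + 1) ≤ 2 * c * w i)
    (a : ℤ → ℕ) : ∑' i, (advStep a i : ℝ≥0∞) * w i ≤ c * ∑' i, (a i : ℝ≥0∞) * w i := by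
  have shift_left : ∑' i, ((a (i - 1) / 2 : ℕ) : ℝ≥0∞) * w i
      = ∑' i, ((a i / 2 : ℕ) : ℝ≥0∞) * w (i + 1) := by
    simpa using (Equiv.subRight (1 : ℤ)).tsum_eq fun i => ((a i / 2 : ℕ) : ℝ≥0∞) * w (i + 1)
  have shift_right : ∑' i, ((a (i + 1) / 2 : ℕ) : ℝ≥0∞) * w i
      = ∑' i, ((a i / 2 : ℕ) : ℝ≥0∞) * w (i - 1) := by
    simpa using (Equiv.addRight (1 : ℤ)).tsum_eq fun i => ((a i / 2 : ℕ) : ℝ≥0∞) * w (i - 1)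
  calc ∑' i, (advStep a i : ℝ≥0∞) * w i
      = ∑' i, ((a (i - 1) / 2 : ℕ) : ℝ≥0∞) * w i + ∑' i, ((a (i + 1) / 2 : ℕ) : ℝ≥0∞) * w i
          + ∑' i, ((a i % 2 : ℕ) : ℝ≥0∞) * w i := by
        simp only [advStep, Nat.cast_add, add_mul, ENNReal.tsum_add]
    _ = ∑' i, (((a i / 2 : ℕ) : ℝ≥0∞) * (w (i - 1) + w (i + 1))
          + ((a i % 2 : ℕ) : ℝ≥0∞) * w i) := by
        rw [shift_left, shift_right, ← ENNReal.tsum_add, ← ENNReal.tsum_add]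
        exact tsum_congr fun i => by ring
    _ ≤ ∑' i, c * ((a i : ℝ≥0∞) * w i) :=
        ENNReal.tsum_le_tsum fun i => div_two_mul_add_mod_two_mul_le hc (hw i) (a i)
    _ = c * ∑' i, (a i : ℝ≥0∞) * w i := ENNReal.tsum_mul_left

theorem tsum_adv_mul_le (hc : 1 ≤ c) (hw : ∀ i, w (i - 1) + w (i + 1) ≤ 2 * c * w i) (b : ℕ) :
    ∀ j, ∑' i, (adv b j i : ℝ≥0∞) * w i ≤ c ^ j * (b * w 0)
  | 0 => by
    rw [tsum_eq_single 0 fun i hi => by simp [adv, hi]]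
    simp [adv]
  | j + 1 => calc
    ∑' i, (adv b (j + 1) i : ℝ≥0∞) * w i ≤ c * ∑' i, (adv b j i : ℝ≥0∞) * w i := by
      rw [adv_succ]; exact tsum_advStep_mul_le hc hw _
    _ ≤ c * (c ^ j * (b * w 0)) := by gcongr; exact tsum_adv_mul_le hc hw b j
    _ = c ^ (j + 1) * (b * w 0) := by ring

end Potential

lemma exp_mul_sub_one_add_exp_mul_add_one (l x : ℝ) :
    exp (l * (x - 1)) + exp (l * (x + 1)) = 2 * cosh l * exp (l * x) := by
  rw [cosh_eq, mul_sub, mul_add, mul_one, exp_sub, exp_add, exp_neg]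
  field_simp
  ring

theorem adv_mul_exp_le (b j : ℕ) (l : ℝ) (i : ℤ) :
    (adv b j i : ℝ) * exp (l * i) ≤ b * cosh l ^ j := by
  set w : ℤ → ℝ≥0∞ := fun k => ENNReal.ofReal (exp (l * k))
  have hc : 1 ≤ ENNReal.ofReal (cosh l) := by simp [one_le_cosh]
  have hw : ∀ k, w (k - 1) + w (k + 1) ≤ 2 * ENNReal.ofReal (cosh l) * w k := fun k => by
    simp only [w, Int.cast_sub, Int.cast_add, Int.cast_one]
    rw [← ENNReal.ofReal_add (exp_pos _).le (exp_pos _).le, exp_mul_sub_one_add_exp_mul_add_one,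
      ENNReal.ofReal_mul (by positivity), ENNReal.ofReal_mul zero_le_two, ENNReal.ofReal_ofNat]
  have hbound : (adv b j i : ℝ≥0∞) * w i ≤ ENNReal.ofReal (cosh l) ^ j * (b * w 0) :=
    (ENNReal.le_tsum i).trans (tsum_adv_mul_le hc hw b j)
  simp only [w, Int.cast_zero, mul_zero, exp_zero, ENNReal.ofReal_one, mul_one] at hbound
  rw [← ENNReal.ofReal_natCast, ← ENNReal.ofReal_mul (Nat.cast_nonneg _),
    ← ENNReal.ofReal_pow (cosh_pos l).le, ← ENNReal.ofReal_natCast b,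
    ← ENNReal.ofReal_mul (by positivity), ENNReal.ofReal_le_ofReal_iff (by positivity)] at hbound
  linarith

theorem adv_le_mul_exp (b : ℕ) {r : ℕ} (hr : r ≠ 0) (i : ℤ) :
    (adv b r i : ℝ) ≤ b * exp (-((i : ℝ) ^ 2 / (2 * r))) := by
  have hcosh : cosh ((i : ℝ) / r) ^ r ≤ exp ((i : ℝ) ^ 2 / (2 * r)) := calc
    cosh ((i : ℝ) / r) ^ r ≤ exp (((i : ℝ) / r) ^ 2 / 2) ^ r := by
      gcongr; exact cosh_le_exp_half_sq _
    _ = exp ((i : ℝ) ^ 2 / (2 * r)) := by rw [← exp_nat_mul]; congr 1; field_simp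
  have h : (adv b r i : ℝ) * exp ((i : ℝ) ^ 2 / r) ≤ b * exp ((i : ℝ) ^ 2 / (2 * r)) := by
    have h := adv_mul_exp_le b r ((i : ℝ) / r) i
    rw [show (i : ℝ) / r * i = (i : ℝ) ^ 2 / r by ring] at h
    exact h.trans (by gcongr)
  rwa [← le_div_iff₀ (exp_pos _), mul_div_assoc, ← exp_sub,
    show (i : ℝ) ^ 2 / (2 * r) - (i : ℝ) ^ 2 / r = -((i : ℝ) ^ 2 / (2 * r)) by ring] at h

/-- After `r` rounds of the Advantage Process with `b` balls, every box at distance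
more than `√(2 r ln b)` from the origin is empty. -/
theorem stmt6 (b r : ℕ) (i : ℤ)
    (hi : Real.sqrt (2 * r * Real.log b) < |(i : ℝ)|) : adv b r i = 0 := by
  have hi0 : 0 < |(i : ℝ)| := (sqrt_nonneg _).trans_lt hi
  rcases Nat.eq_zero_or_pos r with rfl | hr
  · have hi : i ≠ 0 := by rintro rfl; simp at hi0
    simp [adv, hi]
  have hlog : log b < (i : ℝ) ^ 2 / (2 * r) := by
    rw [sqrt_lt' hi0, sq_abs] at hi
    rw [lt_div_iff₀ (by positivity)]
    linarith
  have hsmall : (b : ℝ) * exp (-((i : ℝ) ^ 2 / (2 * r))) < 1 := by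
    rcases Nat.eq_zero_or_pos b with rfl | hb
    · simp
    calc (b : ℝ) * exp (-((i : ℝ) ^ 2 / (2 * r))) < b * exp (-log b) := by gcongr
      _ = 1 := by rw [exp_neg, exp_log (by positivity)]; field_simp
  have hlt : (adv b r i : ℝ) < 1 := (adv_le_mul_exp b hr.ne' i).trans_lt hsmall
  exact_mod_cast Nat.lt_one_iff.mp (by exact_mod_cast hlt)
end

section
/- Let $\varepsilon > 0$ and suppose $d = d(n) \to \infty$ with $d = o(\ln n)$, and suppose the positive integer $q = q(n)$ satisfies $(4d(q+1))^d > n^{d+1}/3$. Then for all sufficiently large $n$, $\left(\frac{(1+\varepsilon)d(q+1)}{e}\right)^{(1+\varepsilon)d} > n^{(1+\varepsilon)d + 1}$. -/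
theorem stmt17 (ε : ℝ) (hε : 0 < ε) (d q : ℕ → ℕ)
    (hd : Filter.Tendsto d Filter.atTop Filter.atTop)
    (hdo : Filter.Tendsto (fun n => (d n : ℝ) / Real.log n) Filter.atTop (nhds 0))
    (hqpos : ∀ n, 0 < q n)
    (hlow : ∀ n : ℕ, (n : ℝ) ^ (d n + 1) / 3 < ((4 * d n * (q n + 1) : ℕ) : ℝ) ^ (d n)) :
    ∀ᶠ n : ℕ in Filter.atTop,
      (n : ℝ) ^ ((1 + ε) * (d n : ℝ) + 1) <
        (((1 + ε) * (d n : ℝ) * ((q n : ℝ) + 1)) / Real.exp 1) ^ ((1 + ε) * (d n : ℝ)) := by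
  have hε1 : (0:ℝ) < 1 + ε := by linarith
  have hpos : ∀ᶠ n : ℕ in Filter.atTop, (d n : ℝ) / Real.log n ∈ Set.Ioi (0:ℝ) := by
    filter_upwards [hd.eventually_ge_atTop 1, Filter.eventually_ge_atTop 2] with n h1 h2
    have hn : (2:ℝ) ≤ (n:ℝ) := by exact_mod_cast h2
    have hlog : 0 < Real.log n := Real.log_pos (by linarith)
    have hdn : (1:ℝ) ≤ (d n : ℝ) := by exact_mod_cast h1
    exact Set.mem_Ioi.mpr (div_pos (by linarith) hlog)
  have hLD : Filter.Tendsto (fun n : ℕ => Real.log n / d n) Filter.atTop Filter.atTop := by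
    have h := (tendsto_nhdsWithin_of_tendsto_nhds_of_eventually_within _ hdo hpos).inv_tendsto_nhdsGT_zero
    refine h.congr fun n => ?_
    simp [Pi.inv_def, inv_div]
  filter_upwards [hLD.eventually_ge_atTop (7 * (1 + ε) / ε), hd.eventually_ge_atTop 1,
    Filter.eventually_ge_atTop 2] with n hK hd1 hn2
  set L := Real.log n with hLdef
  set D := (d n : ℝ) with hDdef
  set Q := (q n : ℝ) with hQdef
  have hD1 : (1:ℝ) ≤ D := by rw [hDdef]; exact_mod_cast hd1
  have hD0 : (0:ℝ) < D := by linarith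
  have hn1 : (1:ℝ) < (n:ℝ) := by
    have : (2:ℝ) ≤ (n:ℝ) := by exact_mod_cast hn2
    linarith
  have hL : 0 < L := Real.log_pos hn1
  have hQ : (1:ℝ) ≤ Q := by rw [hQdef]; exact_mod_cast hqpos n
  -- take log of the hypothesis
  have hlow' := hlow n
  have hcast : ((4 * d n * (q n + 1) : ℕ) : ℝ) = 4 * D * (Q + 1) := by push_cast; ring
  rw [hcast] at hlow'
  have hnpos : (0:ℝ) < (n:ℝ) := by linarith
  have hlhs : (0:ℝ) < (n:ℝ) ^ (d n + 1) / 3 := by positivity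
  have hloglt := Real.log_lt_log hlhs hlow'
  rw [Real.log_div (by positivity) (by norm_num), Real.log_pow, Real.log_pow] at hloglt
  -- abbreviations
  set A := Real.log (D * (Q + 1)) with hAdef
  have hDQ0 : (0:ℝ) < D * (Q + 1) := by nlinarith
  have hlog4 : Real.log (4 * D * (Q + 1)) = Real.log 4 + A := by
    rw [hAdef, show (4:ℝ) * D * (Q + 1) = 4 * (D * (Q + 1)) by ring,
      Real.log_mul (by norm_num) (ne_of_gt hDQ0)]
  rw [hlog4] at hloglt
  push_cast at hloglt
  -- hloglt : (D + 1) * L - Real.log 3 < D * (Real.log 4 + A)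
  have hlog4le : Real.log 4 ≤ 3 := by
    have := Real.log_le_sub_one_of_pos (by norm_num : (0:ℝ) < 4)
    linarith
  have hlog3le : Real.log 3 ≤ 2 := by
    have := Real.log_le_sub_one_of_pos (by norm_num : (0:ℝ) < 3)
    linarith
  have hlog3pos : (0:ℝ) < Real.log 3 := Real.log_pos (by norm_num)
  have hDA : (D + 1) * L - 2 - 3 * D < D * A := by nlinarith
  have hεL : 7 * (1 + ε) * D ≤ ε * L := by
    rw [div_le_div_iff₀ hε hD0] at hK
    linarith
  -- rewrite goal via exp
  have hbase : (0:ℝ) < (1 + ε) * D * (Q + 1) / Real.exp 1 := by positivity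
  rw [Real.rpow_def_of_pos hnpos, Real.rpow_def_of_pos hbase, Real.exp_lt_exp]
  have hlogbase : Real.log ((1 + ε) * D * (Q + 1) / Real.exp 1)
      = Real.log (1 + ε) + A - 1 := by
    rw [Real.log_div (by positivity) (Real.exp_ne_zero 1), Real.log_exp,
      show (1 + ε) * D * (Q + 1) = (1 + ε) * (D * (Q + 1)) by ring,
      Real.log_mul (by positivity) (ne_of_gt hDQ0), hAdef]
  rw [hlogbase]
  have hB : 0 ≤ Real.log (1 + ε) := Real.log_nonneg (by linarith)
  nlinarith [mul_lt_mul_of_pos_left hDA hε1,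
    mul_nonneg (le_of_lt (mul_pos hε1 hD0)) hB,
    mul_pos hε1 hD0]
end

section
/- Let $H = (V, E)$ be a finite hypergraph with edges $e_1,\dots,e_m$, and let $l_1,\dots,l_m, h_1,\dots,h_m$ be non-negative integers satisfying $\sum_{j=1}^m \left(e^{-h_j^2/(2|e_j|)} + e^{-l_j^2/(2|e_j|)}\right) < \frac{1}{2}$. Then Balancer has a winning strategy for the Unbalancer-Balancer game $UB(H, \mathbf{l}, \mathbf{h})$: Balancer can guarantee that at the end of the game, every edge $e_j$ satisfies $-l_j \le |B \cap e_j| - |U \cap e_j| \le h_j$, where $B$ and $U$ are the sets of vertices claimed by Balancer and Unbalancer respectively. -/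
variable {V : Type*}

/-- The evolution of the Unbalancer-Balancer game under Balancer's strategy `f`:
the state is (Balancer's vertices, Unbalancer's vertices); for each offered pair `p`
in the list, Balancer claims one vertex (the first if `f s p = true`, otherwise the
second) and Unbalancer claims the other. -/
def ubPlay [DecidableEq V] (f : Finset V × Finset V → V × V → Bool) :
    Finset V × Finset V → List (V × V) → Finset V × Finset V
  | s, [] => s
  | s, p :: rest =>
      ubPlay f (if f s p then (insert p.1 s.1, insert p.2 s.2)
        else (insert p.2 s.1, insert p.1 s.2)) rest

/-- Legality of a sequence of Unbalancer's offers: each offered pair consists of two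
distinct previously unclaimed vertices. -/
def ubLegal [DecidableEq V] (f : Finset V × Finset V → V × V → Bool) :
    Finset V × Finset V → List (V × V) → Prop
  | _, [] => True
  | s, p :: rest => p.1 ≠ p.2 ∧ p.1 ∉ s.1 ∪ s.2 ∧ p.2 ∉ s.1 ∪ s.2 ∧
      ubLegal f (if f s p then (insert p.1 s.1, insert p.2 s.2)
        else (insert p.2 s.1, insert p.1 s.2)) rest


open Real

/-- Probability that a simple random walk of `k` steps ends at position `≥ M`. -/
noncomputable def tailP : ℕ → ℤ → ℝ
  | 0, M => if M ≤ 0 then 1 else 0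
  | k+1, M => (tailP k (M-1) + tailP k (M+1)) / 2

/-- Probability that a simple random walk of `k` steps started at `d` ever exceeds `h`
(including at time 0). -/
noncomputable def crossP (h : ℤ) : ℕ → ℤ → ℝ
  | 0, d => if h < d then 1 else 0
  | k+1, d => if h < d then 1 else (crossP h k (d+1) + crossP h k (d-1)) / 2

lemma tailP_succ (k : ℕ) (M : ℤ) :
    tailP (k+1) M = (tailP k (M-1) + tailP k (M+1)) / 2 := rfl

lemma crossP_succ (h : ℤ) (k : ℕ) (d : ℤ) :
    crossP h (k+1) d = if h < d then 1 else (crossP h k (d+1) + crossP h k (d-1)) / 2 := rfl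

lemma tailP_nonneg (k : ℕ) (M : ℤ) : 0 ≤ tailP k M := by
  induction k generalizing M with
  | zero => simp only [tailP]; split <;> norm_num
  | succ k ih =>
    rw [tailP_succ]
    have := ih (M-1); have := ih (M+1); linarith

lemma tailP_anti (k : ℕ) (M : ℤ) : tailP k (M + 1) ≤ tailP k M := by
  induction k generalizing M with
  | zero =>
    simp only [tailP]
    split <;> split <;> try norm_num
    all_goals omega
  | succ k ih =>
    rw [tailP_succ, tailP_succ]
    have h1 := ih (M - 1)
    have h2 := ih (M + 1)
    have e1 : M + 1 - 1 = M - 1 + 1 := by ring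
    rw [e1]
    linarith

lemma tailP_add (k : ℕ) (M : ℤ) : tailP k M + tailP k (1 - M) = 1 := by
  induction k generalizing M with
  | zero =>
    simp only [tailP]
    split <;> split <;> try norm_num
    all_goals omega
  | succ k ih =>
    rw [tailP_succ, tailP_succ]
    have h1 := ih (M - 1)
    have h2 := ih (M + 1)
    have e1 : 1 - (M - 1) = 1 - M + 1 := by ring
    have e2 : 1 - (M + 1) = 1 - M - 1 := by ring
    rw [e1] at h1; rw [e2] at h2
    linarith

lemma tailP_half (k : ℕ) : (1:ℝ)/2 ≤ tailP k 0 := by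
  have h1 := tailP_add k 0
  have h2 : tailP k 1 ≤ tailP k 0 := by simpa using tailP_anti k 0
  norm_num at h1
  linarith

lemma crossP_nonneg (h : ℤ) (k : ℕ) (d : ℤ) : 0 ≤ crossP h k d := by
  induction k generalizing d with
  | zero => simp only [crossP]; split <;> norm_num
  | succ k ih =>
    rw [crossP_succ]
    split
    · norm_num
    · have := ih (d+1); have := ih (d-1); linarith

lemma crossP_le_one (h : ℤ) (k : ℕ) (d : ℤ) : crossP h k d ≤ 1 := by
  induction k generalizing d with
  | zero => simp only [crossP]; split <;> norm_num
  | succ k ih =>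
    rw [crossP_succ]
    split
    · norm_num
    · have := ih (d+1); have := ih (d-1); linarith

lemma crossP_of_lt (h : ℤ) (k : ℕ) (d : ℤ) (hd : h < d) : crossP h k d = 1 := by
  cases k <;> simp [crossP, hd]

lemma crossP_mono (h : ℤ) (k : ℕ) (d : ℤ) : crossP h k d ≤ crossP h (k+1) d := by
  induction k generalizing d with
  | zero =>
    rcases lt_or_ge h d with hd | hd
    · rw [crossP_of_lt h 0 d hd, crossP_of_lt h 1 d hd]
    · have h0 : crossP h 0 d = 0 := by simp only [crossP, if_neg (not_lt.2 hd)]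
      rw [h0]; exact crossP_nonneg h 1 d
  | succ k ih =>
    show crossP h (k+1) d ≤ crossP h (k+2) d
    rw [crossP_succ, crossP_succ]
    split
    · exact le_refl 1
    · have := ih (d+1); have := ih (d-1); linarith

/-- Reflection-type bound: crossing probability is at most twice a tail probability. -/
lemma crossP_le_two_tailP (h : ℤ) (k : ℕ) : ∀ d : ℤ, d ≤ h →
    crossP h k d ≤ 2 * tailP k (h + 1 - d) := by
  induction k with
  | zero =>
    intro d hd
    have : ¬ (h + 1 - d ≤ 0) := by omega
    simp [crossP, tailP, not_lt.2 hd, this]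
  | succ k ih =>
    intro d hd
    have hnl : ¬ h < d := not_lt.2 hd
    rw [crossP_succ, tailP_succ, if_neg hnl]
    have e1 : h + 1 - d - 1 = h + 1 - (d + 1) := by ring
    have e2 : h + 1 - d + 1 = h + 1 - (d - 1) := by ring
    rw [e1, e2]
    have h2 := ih (d - 1) (by omega)
    rcases lt_or_ge h (d + 1) with hcase | hcase
    · -- d = h
      have hdh : d = h := by omega
      have h1 : crossP h k (d + 1) ≤ 1 := crossP_le_one _ _ _
      have h3 : (1:ℝ)/2 ≤ tailP k (h + 1 - (d + 1)) := by
        rw [hdh]; simpa using tailP_half k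
      linarith
    · have h1 := ih (d + 1) (by omega)
      linarith

/-- Chernoff-type bound on the tail probability. -/
lemma tailP_le_exp (lam : ℝ) (hlam : 0 ≤ lam) (k : ℕ) : ∀ M : ℤ,
    tailP k M ≤ (Real.cosh lam) ^ k * Real.exp (-(lam * M)) := by
  induction k with
  | zero =>
    intro M
    simp only [tailP, pow_zero, one_mul]
    split
    · rename_i hM
      rw [show (1:ℝ) = Real.exp 0 by simp]
      apply Real.exp_le_exp.2
      have : (M:ℝ) ≤ 0 := by exact_mod_cast hM
      nlinarith
    · positivity
  | succ k ih =>
    intro M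
    rw [tailP_succ]
    have h1 := ih (M - 1)
    have h2 := ih (M + 1)
    have key : (Real.cosh lam) ^ (k+1) * Real.exp (-(lam * M)) =
        ((Real.cosh lam) ^ k * Real.exp (-(lam * (M-1))) +
         (Real.cosh lam) ^ k * Real.exp (-(lam * (M+1)))) / 2 := by
      rw [Real.cosh_eq]
      push_cast
      rw [show -(lam * ((M:ℝ)-1)) = lam + -(lam * M) by ring,
          show -(lam * ((M:ℝ)+1)) = -lam + -(lam * M) by ring,
          Real.exp_add, Real.exp_add]
      ring
    rw [key]
    push_cast at h1 h2 ⊢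
    linarith

/-- The main analytic bound on the potential of a fresh edge. -/
lemma crossP_zero_le (h : ℕ) (k : ℕ) :
    crossP (h : ℤ) k 0 ≤ 2 * Real.exp (-(h:ℝ)^2 / (2 * k)) := by
  rcases Nat.eq_zero_or_pos k with rfl | hk
  · have : crossP (h:ℤ) 0 0 = 0 := by
      simp [crossP]
    rw [this]
    positivity
  · have hk' : (0:ℝ) < k := by exact_mod_cast hk
    set lam : ℝ := ((h:ℝ) + 1) / k with hlamdef
    have hlam : 0 ≤ lam := by positivity
    have h1 : crossP (h:ℤ) k 0 ≤ 2 * tailP k ((h:ℤ) + 1) := by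
      have := crossP_le_two_tailP (h:ℤ) k 0 (by positivity)
      simpa using this
    have h2 := tailP_le_exp lam hlam k ((h:ℤ) + 1)
    have h3 : (Real.cosh lam) ^ k ≤ Real.exp (lam ^ 2 / 2) ^ k :=
      pow_le_pow_left₀ (Real.cosh_pos lam).le (Real.cosh_le_exp_half_sq lam) k
    have h4 : Real.exp (lam ^ 2 / 2) ^ k * Real.exp (-(lam * ((h:ℤ)+1 : ℤ))) =
        Real.exp (k * (lam ^ 2 / 2) - lam * ((h:ℝ)+1)) := by
      rw [← Real.exp_nat_mul, ← Real.exp_add]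
      push_cast
      ring_nf
    have h5 : (k:ℝ) * (lam ^ 2 / 2) - lam * ((h:ℝ)+1) = -((h:ℝ)+1)^2 / (2*k) := by
      rw [hlamdef]
      field_simp
      ring
    have h6 : Real.exp (-((h:ℝ)+1)^2 / (2*k)) ≤ Real.exp (-(h:ℝ)^2 / (2*k)) := by
      apply Real.exp_le_exp.2
      apply div_le_div_of_nonneg_right _ (by positivity)
      · nlinarith [Nat.cast_nonneg (α := ℝ) h]
    have hexp : Real.exp (-(lam * ((h:ℤ)+1 : ℤ))) = Real.exp (-(lam * ((h:ℝ)+1))) := by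
      push_cast; ring_nf
    calc crossP (h:ℤ) k 0 ≤ 2 * tailP k ((h:ℤ) + 1) := h1
      _ ≤ 2 * ((Real.cosh lam) ^ k * Real.exp (-(lam * ((h:ℤ)+1 : ℤ)))) := by linarith
      _ ≤ 2 * (Real.exp (lam ^ 2 / 2) ^ k * Real.exp (-(lam * ((h:ℤ)+1 : ℤ)))) := by
          have : (0:ℝ) ≤ Real.exp (-(lam * ((h:ℤ)+1 : ℤ))) := Real.exp_nonneg _
          nlinarith
      _ = 2 * Real.exp (-((h:ℝ)+1)^2 / (2*k)) := by rw [h4, h5]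
      _ ≤ 2 * Real.exp (-(h:ℝ)^2 / (2*k)) := by linarith
section Game

variable {V : Type*} [DecidableEq V]

/-- The potential of one edge at a game state. -/
noncomputable def edgeTerm (E : Finset V) (hh ll : ℕ) (s : Finset V × Finset V) : ℝ :=
  crossP (hh : ℤ) ((E \ (s.1 ∪ s.2)).card) (((s.1 ∩ E).card : ℤ) - ((s.2 ∩ E).card : ℤ)) +
  crossP (ll : ℤ) ((E \ (s.1 ∪ s.2)).card) (-(((s.1 ∩ E).card : ℤ) - ((s.2 ∩ E).card : ℤ)))

lemma edgeTerm_nonneg (E : Finset V) (hh ll : ℕ) (s : Finset V × Finset V) :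
    0 ≤ edgeTerm E hh ll s :=
  add_nonneg (crossP_nonneg _ _ _) (crossP_nonneg _ _ _)

lemma crossP_mono_le (h : ℤ) {k k' : ℕ} (hk : k ≤ k') (d : ℤ) :
    crossP h k d ≤ crossP h k' d := by
  induction k' with
  | zero => simp_all
  | succ k' ih =>
    rcases Nat.eq_or_lt_of_le hk with rfl | hlt
    · exact le_refl _
    · exact le_trans (ih (by omega)) (crossP_mono h k' d)

lemma crossP_lt_one_imp {h : ℤ} {k : ℕ} {d : ℤ} (hc : crossP h k d < 1) : d ≤ h := by
  by_contra hd
  rw [crossP_of_lt h k d (by omega)] at hc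
  exact lt_irrefl _ hc

lemma card_insert_inter {B E : Finset V} {u : V} (hu : u ∉ B) :
    ((insert u B ∩ E).card : ℤ) = ((B ∩ E).card : ℤ) + (if u ∈ E then 1 else 0) := by
  by_cases huE : u ∈ E
  · rw [Finset.insert_inter_of_mem huE, if_pos huE,
      Finset.card_insert_of_notMem (fun hc => hu (Finset.mem_inter.1 hc).1)]
    push_cast; ring
  · rw [Finset.insert_inter_of_notMem huE, if_neg huE, add_zero]

lemma card_sdiff_pair {E B U : Finset V} {u v : V} (huv : u ≠ v)
    (hu : u ∉ B ∪ U) (hv : v ∉ B ∪ U) :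
    ((E \ (B ∪ U)).card : ℤ) = ((E \ (insert u B ∪ insert v U)).card : ℤ) +
      (if u ∈ E then 1 else 0) + (if v ∈ E then 1 else 0) := by
  have hset : insert u B ∪ insert v U = insert u (insert v (B ∪ U)) := by
    ext x; simp [Finset.mem_union, Finset.mem_insert]; tauto
  rw [hset, Finset.sdiff_insert, Finset.sdiff_insert]
  set F := E \ (B ∪ U) with hF
  have hvF : v ∈ F ↔ v ∈ E := by simp [hF, Finset.mem_sdiff, hv]
  have huF : u ∈ F ↔ u ∈ E := by simp [hF, Finset.mem_sdiff, hu]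
  have huFv : u ∈ F.erase v ↔ u ∈ E := by
    simp [Finset.mem_erase, huv, hF, Finset.mem_sdiff, hu]
  by_cases hvE : v ∈ E <;> by_cases huE : u ∈ E
  · rw [Finset.card_erase_of_mem (huFv.2 huE), Finset.card_erase_of_mem (hvF.2 hvE)]
    have h1 : 1 ≤ F.card := Finset.card_pos.2 ⟨v, hvF.2 hvE⟩
    have h2 : 1 ≤ F.card - 1 := by
      have hm := Finset.card_pos.2 ⟨u, huFv.2 huE⟩
      rwa [Finset.card_erase_of_mem (hvF.2 hvE)] at hm
    simp only [huE, hvE, if_true]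
    push_cast [Nat.cast_sub h2, Nat.cast_sub h1]
    ring
  · rw [Finset.erase_eq_of_notMem (fun hc => huE (huFv.1 hc)),
      Finset.card_erase_of_mem (hvF.2 hvE)]
    have h1 : 1 ≤ F.card := Finset.card_pos.2 ⟨v, hvF.2 hvE⟩
    simp only [huE, hvE, if_true, if_false]
    push_cast [Nat.cast_sub h1]
    ring
  · rw [Finset.erase_eq_of_notMem (fun hc => hvE (hvF.1 hc)),
      Finset.card_erase_of_mem (huF.2 huE)]
    have h1 : 1 ≤ F.card := Finset.card_pos.2 ⟨u, huF.2 huE⟩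
    simp only [huE, hvE, if_true, if_false]
    push_cast [Nat.cast_sub h1]
    ring
  · rw [Finset.erase_eq_of_notMem (fun hc => hvE (hvF.1 hc)),
      Finset.erase_eq_of_notMem (fun hc => huE (huF.1 hc))]
    simp [huE, hvE]

/-- The key step inequality: the two options available to Balancer have edge
potentials averaging at most the current edge potential. -/
lemma edge_step (E : Finset V) (hh ll : ℕ) (s : Finset V × Finset V) (u v : V)
    (huv : u ≠ v) (hu : u ∉ s.1 ∪ s.2) (hv : v ∉ s.1 ∪ s.2)
    (hlt : edgeTerm E hh ll s < 1) :
    edgeTerm E hh ll (insert u s.1, insert v s.2) +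
      edgeTerm E hh ll (insert v s.1, insert u s.2) ≤ 2 * edgeTerm E hh ll s := by
  have hu1 : u ∉ s.1 := fun hc => hu (Finset.mem_union_left _ hc)
  have hu2 : u ∉ s.2 := fun hc => hu (Finset.mem_union_right _ hc)
  have hv1 : v ∉ s.1 := fun hc => hv (Finset.mem_union_left _ hc)
  have hv2 : v ∉ s.2 := fun hc => hv (Finset.mem_union_right _ hc)
  set r : ℕ := (E \ (s.1 ∪ s.2)).card with hr
  set d : ℤ := ((s.1 ∩ E).card : ℤ) - ((s.2 ∩ E).card : ℤ) with hd
  -- bounds on d from hlt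
  have hc1 : crossP (hh : ℤ) r d < 1 := by
    have := crossP_nonneg (ll : ℤ) r (-d)
    unfold edgeTerm at hlt; rw [← hr, ← hd] at hlt; linarith
  have hc2 : crossP (ll : ℤ) r (-d) < 1 := by
    have := crossP_nonneg (hh : ℤ) r d
    unfold edgeTerm at hlt; rw [← hr, ← hd] at hlt; linarith
  have hdh : d ≤ (hh : ℤ) := crossP_lt_one_imp hc1
  have hdl : -d ≤ (ll : ℤ) := crossP_lt_one_imp hc2
  -- card computations
  have cT1 : ((insert u s.1 ∩ E).card : ℤ) = ((s.1 ∩ E).card : ℤ) + (if u ∈ E then 1 else 0) :=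
    card_insert_inter hu1
  have cT2 : ((insert v s.2 ∩ E).card : ℤ) = ((s.2 ∩ E).card : ℤ) + (if v ∈ E then 1 else 0) :=
    card_insert_inter hv2
  have cF1 : ((insert v s.1 ∩ E).card : ℤ) = ((s.1 ∩ E).card : ℤ) + (if v ∈ E then 1 else 0) :=
    card_insert_inter hv1
  have cF2 : ((insert u s.2 ∩ E).card : ℤ) = ((s.2 ∩ E).card : ℤ) + (if u ∈ E then 1 else 0) :=
    card_insert_inter hu2
  have cRT : ((E \ (s.1 ∪ s.2)).card : ℤ) = ((E \ (insert u s.1 ∪ insert v s.2)).card : ℤ) +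
      (if u ∈ E then 1 else 0) + (if v ∈ E then 1 else 0) := card_sdiff_pair huv hu hv
  have cRF : ((E \ (s.1 ∪ s.2)).card : ℤ) = ((E \ (insert v s.1 ∪ insert u s.2)).card : ℤ) +
      (if v ∈ E then 1 else 0) + (if u ∈ E then 1 else 0) := card_sdiff_pair huv.symm hv hu
  set rT : ℕ := (E \ (insert u s.1 ∪ insert v s.2)).card with hrT
  set rF : ℕ := (E \ (insert v s.1 ∪ insert u s.2)).card with hrF
  unfold edgeTerm
  simp only
  rw [← hr, ← hd, ← hrT, ← hrF, cT1, cT2, cF1, cF2]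
  by_cases huE : u ∈ E <;> by_cases hvE : v ∈ E <;>
    simp only [huE, hvE, if_pos, if_neg, if_true, if_false] at cRT cRF ⊢
  · -- both in E : discrepancy unchanged, r drops by 2
    have hrr : r = rT + 2 := by omega
    have hrr' : rF = rT := by omega
    have e1 : ((s.1 ∩ E).card : ℤ) + 1 - (((s.2 ∩ E).card : ℤ) + 1) = d := by rw [hd]; ring
    rw [hrr', e1]
    have m1 : crossP (hh : ℤ) rT d ≤ crossP (hh : ℤ) r d := crossP_mono_le _ (by omega) _
    have m2 : crossP (ll : ℤ) rT (-d) ≤ crossP (ll : ℤ) r (-d) := crossP_mono_le _ (by omega) _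
    linarith
  · -- only u in E
    have hrr : r = rT + 1 := by omega
    have hrr' : rF = rT := by omega
    have e1 : ((s.1 ∩ E).card : ℤ) + 1 - (((s.2 ∩ E).card : ℤ) + 0) = d + 1 := by rw [hd]; ring
    have e2 : ((s.1 ∩ E).card : ℤ) + 0 - (((s.2 ∩ E).card : ℤ) + 1) = d - 1 := by rw [hd]; ring
    rw [hrr', e1, e2, hrr]
    rw [crossP_succ (hh : ℤ) rT d, if_neg (not_lt.2 hdh),
        crossP_succ (ll : ℤ) rT (-d), if_neg (not_lt.2 hdl)]
    have e3 : -(d + 1) = -d - 1 := by ring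
    have e4 : -(d - 1) = -d + 1 := by ring
    rw [e3, e4]
    ring_nf
    linarith [le_refl (0:ℝ)]
  · -- only v in E
    have hrr : r = rT + 1 := by omega
    have hrr' : rF = rT := by omega
    have e1 : ((s.1 ∩ E).card : ℤ) + 0 - (((s.2 ∩ E).card : ℤ) + 1) = d - 1 := by rw [hd]; ring
    have e2 : ((s.1 ∩ E).card : ℤ) + 1 - (((s.2 ∩ E).card : ℤ) + 0) = d + 1 := by rw [hd]; ring
    rw [hrr', e1, e2, hrr]
    rw [crossP_succ (hh : ℤ) rT d, if_neg (not_lt.2 hdh),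
        crossP_succ (ll : ℤ) rT (-d), if_neg (not_lt.2 hdl)]
    have e3 : -(d + 1) = -d - 1 := by ring
    have e4 : -(d - 1) = -d + 1 := by ring
    rw [e3, e4]
    ring_nf
    linarith [le_refl (0:ℝ)]
  · -- neither in E
    have hrr : r = rT := by omega
    have hrr' : rF = rT := by omega
    have e1 : ((s.1 ∩ E).card : ℤ) + 0 - (((s.2 ∩ E).card : ℤ) + 0) = d := by rw [hd]; ring
    rw [hrr', e1, ← hrr]
    linarith

end Game

section Main

variable {V : Type*} [DecidableEq V]

/-- The total potential of the game state. -/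
noncomputable def ubPot (m : ℕ) (e : Fin m → Finset V) (l h : Fin m → ℕ)
    (s : Finset V × Finset V) : ℝ :=
  ∑ j, edgeTerm (e j) (h j) (l j) s

/-- Balancer's greedy strategy: pick the option minimizing the potential. -/
noncomputable def ubStrat (m : ℕ) (e : Fin m → Finset V) (l h : Fin m → ℕ) :
    Finset V × Finset V → V × V → Bool := fun s p =>
  @decide (ubPot m e l h (insert p.1 s.1, insert p.2 s.2) ≤
    ubPot m e l h (insert p.2 s.1, insert p.1 s.2)) (Classical.propDecidable _)

lemma ubPot_step (m : ℕ) (e : Fin m → Finset V) (l h : Fin m → ℕ)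
    (s : Finset V × Finset V) (p : V × V) (h1 : p.1 ≠ p.2)
    (h2 : p.1 ∉ s.1 ∪ s.2) (h3 : p.2 ∉ s.1 ∪ s.2) (hs : ubPot m e l h s < 1) :
    ubPot m e l h (if ubStrat m e l h s p then (insert p.1 s.1, insert p.2 s.2)
      else (insert p.2 s.1, insert p.1 s.2)) ≤ ubPot m e l h s := by
  have hterm : ∀ j : Fin m, edgeTerm (e j) (h j) (l j) s < 1 := fun j =>
    lt_of_le_of_lt (Finset.single_le_sum
      (f := fun j => edgeTerm (e j) (h j) (l j) s)
      (fun i _ => edgeTerm_nonneg _ _ _ _) (Finset.mem_univ j)) hs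
  have hsum2 : ubPot m e l h (insert p.1 s.1, insert p.2 s.2) +
      ubPot m e l h (insert p.2 s.1, insert p.1 s.2) ≤ 2 * ubPot m e l h s := by
    unfold ubPot
    rw [← Finset.sum_add_distrib, Finset.mul_sum]
    apply Finset.sum_le_sum
    intro j _
    rw [two_mul]
    have := edge_step (e j) (h j) (l j) s p.1 p.2 h1 h2 h3 (hterm j)
    linarith
  by_cases hc : ubPot m e l h (insert p.1 s.1, insert p.2 s.2) ≤
      ubPot m e l h (insert p.2 s.1, insert p.1 s.2)
  · have : ubStrat m e l h s p = true := by
      unfold ubStrat; exact decide_eq_true hc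
    rw [this, if_pos rfl]
    linarith
  · have : ubStrat m e l h s p = false := by
      unfold ubStrat; exact decide_eq_false hc
    rw [this]
    simp only [Bool.false_eq_true, if_false]
    push_neg at hc
    linarith

lemma ubPot_invariant (m : ℕ) (e : Fin m → Finset V) (l h : Fin m → ℕ)
    (offers : List (V × V)) : ∀ s : Finset V × Finset V,
    ubLegal (ubStrat m e l h) s offers → ubPot m e l h s < 1 →
    ubPot m e l h (ubPlay (ubStrat m e l h) s offers) < 1 := by
  induction offers with
  | nil => intro s _ hs; exact hs
  | cons p rest ih =>
    intro s hleg hs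
    obtain ⟨hne, hu, hv, hrest⟩ := hleg
    rw [ubPlay]
    exact ih _ hrest (lt_of_le_of_lt (ubPot_step m e l h s p hne hu hv hs) hs)

end Main

/-- Balancer's win criterion for the Unbalancer-Balancer game `UB(H, l, h)` on a
hypergraph with edges `e 0, …, e (m-1)`: if
`∑ⱼ (exp(-hⱼ²/(2|eⱼ|)) + exp(-lⱼ²/(2|eⱼ|))) < 1/2`, then Balancer has a strategy
guaranteeing that at the end of any (complete, legal) game, every edge `eⱼ` satisfies
`-lⱼ ≤ |B ∩ eⱼ| - |U ∩ eⱼ| ≤ hⱼ`. -/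
theorem stmt18 {V : Type*} [Fintype V] [DecidableEq V] (m : ℕ)
    (e : Fin m → Finset V) (l h : Fin m → ℕ)
    (hsum : ∑ j, (Real.exp (-(h j : ℝ) ^ 2 / (2 * ((e j).card : ℝ))) +
        Real.exp (-(l j : ℝ) ^ 2 / (2 * ((e j).card : ℝ)))) < 1 / 2) :
    ∃ f : Finset V × Finset V → V × V → Bool,
      ∀ offers : List (V × V), ubLegal f (∅, ∅) offers →
        Fintype.card V - ((ubPlay f (∅, ∅) offers).1 ∪ (ubPlay f (∅, ∅) offers).2).card < 2 →
        ∀ j : Fin m,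
          -(l j : ℤ) ≤ (((ubPlay f (∅, ∅) offers).1 ∩ e j).card : ℤ) -
              (((ubPlay f (∅, ∅) offers).2 ∩ e j).card : ℤ) ∧
          (((ubPlay f (∅, ∅) offers).1 ∩ e j).card : ℤ) -
              (((ubPlay f (∅, ∅) offers).2 ∩ e j).card : ℤ) ≤ (h j : ℤ) := by
  refine ⟨ubStrat m e l h, ?_⟩
  intro offers hleg _
  have hinit : ubPot m e l h ((∅, ∅) : Finset V × Finset V) < 1 := by
    unfold ubPot
    have heq : ∀ j : Fin m, edgeTerm (e j) (h j) (l j) ((∅, ∅) : Finset V × Finset V) =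
        crossP ((h j : ℤ)) (e j).card 0 + crossP ((l j : ℤ)) (e j).card 0 := by
      intro j
      unfold edgeTerm
      simp
    rw [Finset.sum_congr rfl (fun j _ => heq j)]
    have hle : ∀ j : Fin m, crossP ((h j : ℤ)) (e j).card 0 + crossP ((l j : ℤ)) (e j).card 0 ≤
        2 * (Real.exp (-(h j : ℝ) ^ 2 / (2 * ((e j).card : ℝ))) +
          Real.exp (-(l j : ℝ) ^ 2 / (2 * ((e j).card : ℝ)))) := by
      intro j
      have b1 := crossP_zero_le (h j) (e j).card
      have b2 := crossP_zero_le (l j) (e j).card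
      linarith
    calc ∑ j, (crossP ((h j : ℤ)) (e j).card 0 + crossP ((l j : ℤ)) (e j).card 0)
        ≤ ∑ j, 2 * (Real.exp (-(h j : ℝ) ^ 2 / (2 * ((e j).card : ℝ))) +
            Real.exp (-(l j : ℝ) ^ 2 / (2 * ((e j).card : ℝ)))) :=
          Finset.sum_le_sum (fun j _ => hle j)
      _ = 2 * ∑ j, (Real.exp (-(h j : ℝ) ^ 2 / (2 * ((e j).card : ℝ))) +
            Real.exp (-(l j : ℝ) ^ 2 / (2 * ((e j).card : ℝ)))) := by
          rw [Finset.mul_sum]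
      _ < 1 := by linarith
  have hfin := ubPot_invariant m e l h offers (∅, ∅) hleg hinit
  intro j
  set s := ubPlay (ubStrat m e l h) (∅, ∅) offers with hs
  have hterm : edgeTerm (e j) (h j) (l j) s < 1 :=
    lt_of_le_of_lt (Finset.single_le_sum
      (f := fun j => edgeTerm (e j) (h j) (l j) s)
      (fun i _ => edgeTerm_nonneg _ _ _ _) (Finset.mem_univ j)) hfin
  unfold edgeTerm at hterm
  have hn1 := crossP_nonneg ((h j : ℤ)) ((e j \ (s.1 ∪ s.2)).card)
    (((s.1 ∩ e j).card : ℤ) - ((s.2 ∩ e j).card : ℤ))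
  have hn2 := crossP_nonneg ((l j : ℤ)) ((e j \ (s.1 ∪ s.2)).card)
    (-((((s.1 ∩ e j).card : ℤ)) - ((s.2 ∩ e j).card : ℤ)))
  constructor
  · have : -((((s.1 ∩ e j).card : ℤ)) - ((s.2 ∩ e j).card : ℤ)) ≤ (l j : ℤ) :=
      crossP_lt_one_imp (by linarith)
    omega
  · exact crossP_lt_one_imp (by linarith)
end
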